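/- Let μ ⊆ λ and ν be partitions with |μ| + |ν| = |λ|. The assignment φ which sends a tableau T ∈ CST^ν(λ/μ) to the tableau Y of shape λ^t/μ^t whose j-th column, i.e. the entries Y(μ_j+1, j) ≤ Y(μ_j+2, j) ≤ … ≤ Y(λ_j, j), is the weakly increasing sequence of column indices, counted with multiplicity, of the occurrences of the entry j in T, is a well-defined bijection φ : CST^ν(λ/μ) → CST^{λ^t/μ^t}(ν^t). -/

import Mathlib

/-!
A column-standard tableau is determined by the multisets of entries of its columns, since each
column is the weakly increasing arrangement of its multiset; conversely any family of multisets
of the right sizes is realised, by sorting. The relation `Corr` transposes these data: the number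
of entries `c + 1` in column `j` of `Y` is the number of entries `j + 1` in column `c` of `T`.
Under this transposition the content of `T` becomes the column lengths of `Y` and the column
lengths of `T` become the content of `Y`, so both directions of the bijection are instances of
one statement about shapes whose columns are intervals.
-/

noncomputable section

namespace ABW

/-- The underlying cell set of a (straight) Young diagram. -/
def ydShape (ν : YoungDiagram) : Set (ℕ × ℕ) := {c | c ∈ ν}

/-- The cell set of the skew diagram `λ/μ`. -/
def skewShape (lam mu : YoungDiagram) : Set (ℕ × ℕ) := {c | c ∈ lam ∧ c ∉ mu}

/-- `T` is a column-standard tableau of the given shape: its entries are positive exactly on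
the cells of the shape, and each column is weakly increasing from top to bottom. -/
def IsColumnStandard (shape : Set (ℕ × ℕ)) (T : ℕ → ℕ → ℕ) : Prop :=
  (∀ i j, (i, j) ∈ shape → 1 ≤ T i j) ∧
  (∀ i j, (i, j) ∉ shape → T i j = 0) ∧
  (∀ i i' j, (i, j) ∈ shape → (i', j) ∈ shape → i ≤ i' → T i j ≤ T i' j)

/-- `T` has the prescribed content: the entry `k+1` occurs exactly `content k` times
(entries and multiplicities are indexed from `1`, i.e. `content k` counts `k+1`). -/
def HasContentFn (shape : Set (ℕ × ℕ)) (content : ℕ → ℕ) (T : ℕ → ℕ → ℕ) : Prop :=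
  ∀ k, Set.ncard {c : ℕ × ℕ | c ∈ shape ∧ T c.1 c.2 = k + 1} = content k

/-- An element of `CST^ν(λ/μ)`: a column-standard tableau of shape `ν` and content `λ/μ`. -/
def MemCSTshape (lam mu ν : YoungDiagram) (T : ℕ → ℕ → ℕ) : Prop :=
  IsColumnStandard (ydShape ν) T ∧
  HasContentFn (ydShape ν) (fun k => lam.rowLen k - mu.rowLen k) T

/-- An element of `CST^{λᵗ/μᵗ}(νᵗ)`: a column-standard tableau of shape `λᵗ/μᵗ` and
content `νᵗ`. -/
def MemCSTtranspose (lam mu ν : YoungDiagram) (Y : ℕ → ℕ → ℕ) : Prop :=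
  IsColumnStandard (skewShape lam.transpose mu.transpose) Y ∧
  HasContentFn (skewShape lam.transpose mu.transpose) (fun c => ν.colLen c) Y

/-- The defining relation of the bijection `φ`: for every `j` and every column index `c`,
the number of cells of the `j`-th column of `Y` (of shape `λᵗ/μᵗ`) with entry `c+1` equals
the number of occurrences of the entry `j+1` in the `c`-th column of `T` (of shape `ν`);
that is, the `j`-th column of `Y` is the weakly increasing sequence of the column indices,
counted with multiplicity, of the occurrences of the entry `j` in `T` (columns and entries
are `0`-indexed and `1`-indexed respectively, matched by a shift). -/
def Corr (lam mu ν : YoungDiagram) (T Y : ℕ → ℕ → ℕ) : Prop :=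
  ∀ j c : ℕ,
    Set.ncard {i : ℕ | (i, j) ∈ skewShape lam.transpose mu.transpose ∧ Y i j = c + 1}
      = Set.ncard {r : ℕ | (r, c) ∈ ν ∧ T r c = j + 1}

end ABW

open ABW

namespace ABW

open Finset

/-- The number of entries `≤ v` of a column holding `m c` entries `c + 1` for each `c`. -/
def cumCount (m : ℕ → ℕ) (v : ℕ) : ℕ := ∑ c ∈ range v, m c

lemma cumCount_mono (m : ℕ → ℕ) : Monotone (cumCount m) := fun _ _ h =>
  sum_le_sum_of_subset (range_subset_range.2 h)

lemma cumCount_le_of_eq_zero {m : ℕ → ℕ} {B : ℕ} (hB : ∀ c, B ≤ c → m c = 0) (v : ℕ) :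
    cumCount m v ≤ cumCount m B :=
  sum_le_sum_of_ne_zero fun c _ hc => mem_range.2 (by by_contra h; exact hc (hB c (by omega)))

lemma mem_iff_sub_lt_card {A : Finset ℕ} {a i : ℕ} (hA : ∀ x ∈ A, a ≤ x)
    (hdown : ∀ x ∈ A, ∀ y, a ≤ y → y ≤ x → y ∈ A) (hi : a ≤ i) : i ∈ A ↔ i - a < #A := by
  constructor
  · intro hiA
    have := card_le_card fun y (hy : y ∈ Ico a (i + 1)) =>
      hdown i hiA y (mem_Ico.1 hy).1 (by have := (mem_Ico.1 hy).2; omega)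
    rw [Nat.card_Ico] at this
    omega
  · intro hlt
    by_contra hiA
    have := card_le_card (show A ⊆ Ico a i from fun x hx => mem_Ico.2 ⟨hA x hx, by
      by_contra hix
      exact hiA (hdown x hx i hi (by omega))⟩)
    rw [Nat.card_Ico] at this
    omega

def IsSortedFilling (a b : ℕ) (m : ℕ → ℕ) (g : ℕ → ℕ) : Prop :=
  (∀ i, a ≤ i ∧ i < b → 1 ≤ g i) ∧
  (∀ i, ¬(a ≤ i ∧ i < b) → g i = 0) ∧
  (∀ i i', a ≤ i ∧ i < b → a ≤ i' ∧ i' < b → i ≤ i' → g i ≤ g i') ∧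
  ∀ v, #{i ∈ Ico a b | g i = v + 1} = m v

namespace IsSortedFilling

variable {a b : ℕ} {m g g' : ℕ → ℕ}

lemma card_filter_le (hg : IsSortedFilling a b m g) (v : ℕ) :
    #{i ∈ Ico a b | g i ≤ v} = cumCount m v := by
  induction v with
  | zero =>
    simp only [cumCount, range_zero, sum_empty, card_eq_zero, filter_eq_empty_iff, mem_Ico]
    intro i hi
    have := hg.1 i hi
    omega
  | succ v ih =>
    have hsplit : {i ∈ Ico a b | g i ≤ v + 1} =
        {i ∈ Ico a b | g i ≤ v} ∪ {i ∈ Ico a b | g i = v + 1} := by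
      rw [← filter_or]
      exact filter_congr fun i _ => by omega
    rw [hsplit, card_union_of_disjoint (disjoint_filter.2 fun _ _ _ => by omega), ih, hg.2.2.2 v,
      cumCount, cumCount, sum_range_succ]

lemma le_iff (hg : IsSortedFilling a b m g) {i : ℕ} (hi : a ≤ i ∧ i < b) (v : ℕ) :
    g i ≤ v ↔ i - a < cumCount m v := by
  rw [← hg.card_filter_le v]
  have := mem_iff_sub_lt_card (A := {i ∈ Ico a b | g i ≤ v}) (i := i)
    (fun x hx => (mem_Ico.1 (mem_filter.1 hx).1).1) (fun x hx y hay hyx => by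
      obtain ⟨hx, hgx⟩ := mem_filter.1 hx
      have hx := mem_Ico.1 hx
      exact mem_filter.2 ⟨mem_Ico.2 ⟨hay, by omega⟩,
        (hg.2.2.1 y x ⟨hay, by omega⟩ hx hyx).trans hgx⟩) hi.1
  simpa [hi.1, hi.2] using this

lemma unique (hg : IsSortedFilling a b m g) (hg' : IsSortedFilling a b m g') : g = g' := by
  funext i
  by_cases hi : a ≤ i ∧ i < b
  · exact le_antisymm ((hg.le_iff hi _).2 ((hg'.le_iff hi _).1 le_rfl))
      ((hg'.le_iff hi _).2 ((hg.le_iff hi _).1 le_rfl))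
  · rw [hg.2.1 i hi, hg'.2.1 i hi]

end IsSortedFilling

def sortedFilling (m : ℕ → ℕ) (a b i : ℕ) : ℕ :=
  if a ≤ i ∧ i < b then sInf {v | i - a < cumCount m v} else 0

lemma sortedFilling_le_iff {m : ℕ → ℕ} {a b B i : ℕ} (hsum : cumCount m B = b - a)
    (hi : a ≤ i ∧ i < b) (v : ℕ) : sortedFilling m a b i ≤ v ↔ i - a < cumCount m v := by
  rw [sortedFilling, if_pos hi]
  refine ⟨fun h => ?_, fun h => Nat.sInf_le h⟩
  have hne : {v | i - a < cumCount m v}.Nonempty := ⟨B, by simp only [Set.mem_ofPred_eq]; omega⟩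
  exact (Nat.sInf_mem hne).trans_le (cumCount_mono m h)

lemma isSortedFilling_sortedFilling {m : ℕ → ℕ} {a b B : ℕ} (hB : ∀ c, B ≤ c → m c = 0)
    (hsum : cumCount m B = b - a) : IsSortedFilling a b m (sortedFilling m a b) := by
  have hle := fun {i} hi => sortedFilling_le_iff hsum (i := i) hi
  refine ⟨fun i hi => ?_, fun i hi => by rw [sortedFilling, if_neg hi], fun i i' hi hi' hii' => ?_,
    fun v => ?_⟩
  · have := hle hi 0
    simp only [cumCount, range_zero, sum_empty, Nat.not_lt_zero, iff_false] at this
    omega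
  · exact (hle hi _).2 (lt_of_le_of_lt (by omega) ((hle hi' _).1 le_rfl))
  · have hfilter : {i ∈ Ico a b | sortedFilling m a b i = v + 1}
        = Ico (a + cumCount m v) (a + cumCount m (v + 1)) := by
      ext i
      simp only [mem_filter, mem_Ico]
      have htop := cumCount_le_of_eq_zero hB (v + 1)
      constructor
      · rintro ⟨hi, heq⟩
        have h1 := hle hi v
        have h2 := hle hi (v + 1)
        omega
      · intro hi
        have hi' : a ≤ i ∧ i < b := by omega
        have h1 := hle hi' v
        have h2 := hle hi' (v + 1)
        refine ⟨hi', ?_⟩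
        omega
    rw [hfilter, Nat.card_Ico, cumCount, cumCount, sum_range_succ]
    omega

def colShape (lo hi : ℕ → ℕ) : Set (ℕ × ℕ) := {p | lo p.2 ≤ p.1 ∧ p.1 < hi p.2}

def colCount (s : Set (ℕ × ℕ)) (T : ℕ → ℕ → ℕ) (j v : ℕ) : ℕ :=
  Set.ncard {i | (i, j) ∈ s ∧ T i j = v + 1}

section colShape

variable {lo hi : ℕ → ℕ}

lemma colCount_colShape (T : ℕ → ℕ → ℕ) (j v : ℕ) :
    colCount (colShape lo hi) T j v = #{i ∈ Ico (lo j) (hi j) | T i j = v + 1} := by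
  rw [colCount, ← Set.ncard_coe_finset]
  congr 1
  ext i
  simp [colShape, and_assoc]

lemma mem_colShape_bounds {R W : ℕ} (hW : ∀ j, W ≤ j → hi j ≤ lo j) (hR : ∀ j, hi j ≤ R)
    {p : ℕ × ℕ} (hp : p ∈ colShape lo hi) : p.1 < R ∧ p.2 < W := by
  obtain ⟨h1, h2⟩ := hp
  refine ⟨h2.trans_le (hR _), ?_⟩
  by_contra h
  have := hW p.2 (by omega)
  omega

lemma isColumnStandard_and_colCount_iff (T : ℕ → ℕ → ℕ) (m : ℕ → ℕ → ℕ) :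
    (IsColumnStandard (colShape lo hi) T ∧ ∀ j v, colCount (colShape lo hi) T j v = m j v) ↔
      ∀ j, IsSortedFilling (lo j) (hi j) (m j) (fun i => T i j) := by
  simp only [colCount_colShape]
  exact ⟨fun ⟨⟨hpos, hzero, hmono⟩, hcount⟩ j =>
      ⟨fun i => hpos i j, fun i => hzero i j, fun i i' => hmono i i' j, hcount j⟩,
    fun h => ⟨⟨fun i j => (h j).1 i, fun i j => (h j).2.1 i, fun i i' j => (h j).2.2.1 i i'⟩,
      fun j => (h j).2.2.2⟩⟩

lemma existsUnique_isColumnStandard_colCount {m : ℕ → ℕ → ℕ} {B : ℕ}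
    (hB : ∀ j c, B ≤ c → m j c = 0) (hsum : ∀ j, cumCount (m j) B = hi j - lo j) :
    ∃! T, IsColumnStandard (colShape lo hi) T ∧ ∀ j v, colCount (colShape lo hi) T j v = m j v := by
  simp only [isColumnStandard_and_colCount_iff]
  refine ⟨fun i j => sortedFilling (m j) (lo j) (hi j) i,
    fun j => isSortedFilling_sortedFilling (hB j) (hsum j), fun T hT => ?_⟩
  funext i j
  exact congrFun ((hT j).unique (isSortedFilling_sortedFilling (hB j) (hsum j))) i

lemma sum_colCount_colShape {T : ℕ → ℕ → ℕ} {j B : ℕ}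
    (hT : ∀ i, lo j ≤ i ∧ i < hi j → 1 ≤ T i j ∧ T i j ≤ B) :
    ∑ v ∈ range B, colCount (colShape lo hi) T j v = hi j - lo j := by
  classical
  rw [← Nat.card_Ico, card_eq_sum_card_fiberwise (f := fun i => T i j - 1) (t := range B)]
  · refine sum_congr rfl fun v _ => ?_
    rw [colCount_colShape]
    exact congrArg card (filter_congr fun i hi => by have := hT i (mem_Ico.1 hi); omega)
  · intro i hi
    have := hT i (mem_Ico.1 hi)
    simp only [coe_range, Set.mem_Iio]
    omega

end colShape

lemma ncard_entry_eq_sum_colCount {s : Set (ℕ × ℕ)} {R W : ℕ} (hs : ∀ p ∈ s, p.1 < R ∧ p.2 < W)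
    (T : ℕ → ℕ → ℕ) (k : ℕ) :
    Set.ncard {p : ℕ × ℕ | p ∈ s ∧ T p.1 p.2 = k + 1} = ∑ j ∈ range W, colCount s T j k := by
  classical
  have hset : {p : ℕ × ℕ | p ∈ s ∧ T p.1 p.2 = k + 1}
      = ↑{p ∈ range R ×ˢ range W | p ∈ s ∧ T p.1 p.2 = k + 1} := by
    ext p
    simp only [Set.mem_ofPred_eq, coe_filter, mem_product, mem_range]
    exact ⟨fun h => ⟨hs p h.1, h⟩, fun h => h.2⟩
  have hcol : ∀ j ∈ range W,
      colCount s T j k = #{i ∈ range R | (i, j) ∈ s ∧ T i j = k + 1} := by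
    intro j _
    rw [colCount, ← Set.ncard_coe_finset]
    congr 1
    ext i
    simp only [Set.mem_ofPred_eq, coe_filter, mem_range]
    exact ⟨fun h => ⟨(hs _ h.1).1, h⟩, fun h => h.2⟩
  rw [hset, Set.ncard_coe_finset, card_filter, sum_product_right, sum_congr rfl hcol]
  exact sum_congr rfl fun j _ => (card_filter _ _).symm

theorem existsUnique_transpose_colShape {lo hi lo' hi' : ℕ → ℕ} {R W R' W' : ℕ}
    (hW : ∀ c, W ≤ c → hi c ≤ lo c) (hR : ∀ c, hi c ≤ R)
    (hW' : ∀ j, W' ≤ j → hi' j ≤ lo' j) (hR' : ∀ j, hi' j ≤ R')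
    {T : ℕ → ℕ → ℕ} (hT : IsColumnStandard (colShape lo hi) T)
    (hcont : HasContentFn (colShape lo hi) (fun k => hi' k - lo' k) T) :
    ∃! Y, (IsColumnStandard (colShape lo' hi') Y ∧
        HasContentFn (colShape lo' hi') (fun c => hi c - lo c) Y) ∧
      ∀ j c, colCount (colShape lo' hi') Y j c = colCount (colShape lo hi) T c j := by
  have hbound := fun p (hp : p ∈ colShape lo hi) => mem_colShape_bounds hW hR hp
  have hB : ∀ j c, W ≤ c → colCount (colShape lo hi) T c j = 0 := fun j c hc => by
    rw [colCount_colShape, Ico_eq_empty_of_le (hW c hc), filter_empty, card_empty]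
  have hsum : ∀ j, cumCount (fun c => colCount (colShape lo hi) T c j) W = hi' j - lo' j :=
    fun j => (ncard_entry_eq_sum_colCount hbound T j).symm.trans (hcont j)
  -- an entry `k + 1` of `T` with `W' ≤ k` would contradict the content `hi' k - lo' k = 0`
  have hentry : ∀ i c, lo c ≤ i ∧ i < hi c → 1 ≤ T i c ∧ T i c ≤ W' := by
    intro i c hic
    refine ⟨hT.1 i c hic, ?_⟩
    by_contra hlt
    have hfin : {p : ℕ × ℕ | p ∈ colShape lo hi ∧ T p.1 p.2 = T i c - 1 + 1}.Finite :=
      (range R ×ˢ range W).finite_toSet.subset fun p hp => by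
        simpa only [coe_product, coe_range, Set.mem_prod, Set.mem_Iio] using hbound p hp.1
    have hpos := (Set.ncard_pos hfin).2
      ⟨(i, c), hic, show T i c = T i c - 1 + 1 by have := hT.1 i c hic; omega⟩
    rw [hcont] at hpos
    dsimp only at hpos
    have := hW' (T i c - 1) (by omega)
    omega
  obtain ⟨Y, hY, huniq⟩ := existsUnique_isColumnStandard_colCount hB hsum
  refine ⟨Y, ⟨⟨hY.1, fun c => ?_⟩, hY.2⟩, fun Y' hY' => huniq Y' ⟨hY'.1.1, hY'.2⟩⟩
  rw [ncard_entry_eq_sum_colCount (fun p hp => mem_colShape_bounds hW' hR' hp) Y c]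
  simp only [hY.2]
  exact sum_colCount_colShape (hentry · c)

end ABW

namespace YoungDiagram

lemma colLen_eq_zero_of_rowLen_le (μ : YoungDiagram) {j : ℕ} (h : μ.rowLen 0 ≤ j) :
    μ.colLen j = 0 := by
  by_contra hj
  have := mem_iff_lt_rowLen.1 (mem_iff_lt_colLen.2 (Nat.pos_of_ne_zero hj))
  omega

lemma rowLen_eq_zero_of_colLen_le (μ : YoungDiagram) {i : ℕ} (h : μ.colLen 0 ≤ i) :
    μ.rowLen i = 0 := by
  rw [← colLen_transpose]
  exact μ.transpose.colLen_eq_zero_of_rowLen_le (by rwa [rowLen_transpose])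

end YoungDiagram

namespace ABW

lemma ydShape_eq_colShape (ν : YoungDiagram) : ydShape ν = colShape (fun _ => 0) ν.colLen := by
  ext ⟨i, j⟩
  simp [ydShape, colShape, YoungDiagram.mem_iff_lt_colLen]

lemma skewShape_transpose_eq_colShape (lam mu : YoungDiagram) :
    skewShape lam.transpose mu.transpose = colShape mu.rowLen lam.rowLen := by
  ext ⟨i, j⟩
  simp [skewShape, colShape, YoungDiagram.mem_iff_lt_rowLen, and_comm]

lemma corr_iff {lam mu ν : YoungDiagram} {T Y : ℕ → ℕ → ℕ} :
    Corr lam mu ν T Y ↔ ∀ j c, colCount (colShape mu.rowLen lam.rowLen) Y j c =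
      colCount (colShape (fun _ => 0) ν.colLen) T c j := by
  rw [← ydShape_eq_colShape, ← skewShape_transpose_eq_colShape]
  rfl

end ABW

theorem statement_9_general (lam mu ν : YoungDiagram) :
    (∀ T : ℕ → ℕ → ℕ, MemCSTshape lam mu ν T →
      ∃! Y : ℕ → ℕ → ℕ, MemCSTtranspose lam mu ν Y ∧ Corr lam mu ν T Y) ∧
    (∀ Y : ℕ → ℕ → ℕ, MemCSTtranspose lam mu ν Y →
      ∃! T : ℕ → ℕ → ℕ, MemCSTshape lam mu ν T ∧ Corr lam mu ν T Y) := by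
  have hνW : ∀ c, ν.rowLen 0 ≤ c → ν.colLen c ≤ 0 :=
    fun c hc => (ν.colLen_eq_zero_of_rowLen_le hc).le
  have hνR : ∀ c, ν.colLen c ≤ ν.colLen 0 := fun c => ν.colLen_anti 0 c c.zero_le
  have hlamW : ∀ j, lam.colLen 0 ≤ j → lam.rowLen j ≤ mu.rowLen j :=
    fun j hj => (lam.rowLen_eq_zero_of_colLen_le hj).trans_le (mu.rowLen j).zero_le
  have hlamR : ∀ j, lam.rowLen j ≤ lam.rowLen 0 := fun j => lam.rowLen_anti 0 j j.zero_le
  simp only [MemCSTshape, MemCSTtranspose, corr_iff, ydShape_eq_colShape,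
    skewShape_transpose_eq_colShape]
  refine ⟨fun T hT => existsUnique_transpose_colShape hνW hνR hlamW hlamR hT.1 hT.2,
    fun Y hY => ?_⟩
  refine (existsUnique_congr fun T => ?_).1
    (existsUnique_transpose_colShape hlamW hlamR hνW hνR hY.1 hY.2)
  rw [forall_comm]
  simp only [eq_comm]

/-- **Statement 9** (the transpose bijection `φ : CST^ν(λ/μ) → CST^{λᵗ/μᵗ}(νᵗ)`).
Let `μ ⊆ λ` and `ν` be partitions with `|μ| + |ν| = |λ|`.  The assignment sending
a column-standard tableau `T` of shape `ν` and content `λ/μ` to the tableau `Y` of shape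
`λᵗ/μᵗ` whose `j`-th column is the weakly increasing sequence of column indices, with
multiplicity, of the occurrences of the entry `j` in `T`, is a well-defined bijection
onto the column-standard tableaux of shape `λᵗ/μᵗ` and content `νᵗ`.  This is expressed
by: every `T` corresponds to a unique such `Y`, and every `Y` arises from a unique `T`. -/
theorem statement_9 (lam mu ν : YoungDiagram)
    (hsub : ∀ i, mu.rowLen i ≤ lam.rowLen i)
    (hsize : mu.card + ν.card = lam.card) :
    (∀ T : ℕ → ℕ → ℕ, MemCSTshape lam mu ν T →
      ∃! Y : ℕ → ℕ → ℕ, MemCSTtranspose lam mu ν Y ∧ Corr lam mu ν T Y) ∧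
    (∀ Y : ℕ → ℕ → ℕ, MemCSTtranspose lam mu ν Y →
      ∃! T : ℕ → ℕ → ℕ, MemCSTshape lam mu ν T ∧ Corr lam mu ν T Y) :=
  statement_9_general lam mu ν
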